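/- Let V be a finite-dimensional complex vector space with conjugation σ, let K ⊆ E ⊆ V be complex subspaces with σ(K) = K, and let ε be an alternating ℂ-bilinear form on V with ε(k, x) = 0 for all k ∈ K and x ∈ E. Assume E + σ(E) = V and set L := L(E,ε). Then L ∩ σ̂(L) = K × {0} if and only if: for every X ∈ E ∩ σ(E), if ε(X,Y) = conj(ε(σ(X), σ(Y))) for all Y ∈ E ∩ σ(E), then X ∈ K. -/

import Mathlib

variable {V : Type*} [AddCommGroup V] [Module ℂ V]

/-- The conjugate-transported linear functional `conj ∘ ξ ∘ σ`. -/
noncomputable def conjDual (σ : V →ₛₗ[starRingEnd ℂ] V) (ξ : Module.Dual ℂ V) :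
    Module.Dual ℂ V where
  toFun v := starRingEnd ℂ (ξ (σ v))
  map_add' u v := by simp
  map_smul' c v := by simp [LinearMap.map_smulₛₗ]

/-- The extension `σ̂` of a conjugation `σ` on `V` to `V × V*`, `σ̂(x, ξ) = (σx, conj ∘ ξ ∘ σ)`. -/
noncomputable def sigmaHat (σ : V →ₛₗ[starRingEnd ℂ] V) :
    V × Module.Dual ℂ V → V × Module.Dual ℂ V :=
  fun p => (σ p.1, conjDual σ p.2)

/-- The (maximal isotropic) subspace `L(E, ε) ⊆ V × V*` attached to a subspace `E ⊆ V` and a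
bilinear form `ε`. -/
def LSet (E : Submodule ℂ V) (ε : V → V → ℂ) : Set (V × Module.Dual ℂ V) :=
  {p | p.1 ∈ E ∧ ∀ y ∈ E, p.2 y = ε p.1 y}


/-! Write `F = σ(E)`. A pair `(x, ξ)` lies in `L ∩ σ̂(L)` exactly when `x ∈ E ∩ F`, `ξ = ε(x, ·)`
on `E` and `ξ = conj ε(σx, σ ·)` on `F`. Functionals on `E` and on `F` that agree on `E ∩ F` glue
to a functional on `V`, so the condition on `X` says precisely that `X` is the first component of
a point of `L ∩ σ̂(L)`. Conversely, over `x ∈ K` both prescribed functionals vanish, and since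
`E + F = V` this forces `ξ = 0`. -/

open Function Set

section DualExtension

variable {𝕜 M : Type*} [DivisionRing 𝕜] [AddCommGroup M] [Module 𝕜 M]

theorem Module.Dual.exists_eqOn_of_eqOn_inf {p q : Submodule 𝕜 M} {f g : Module.Dual 𝕜 M}
    (hfg : EqOn f g (p ⊓ q : Submodule 𝕜 M)) :
    ∃ ξ : Module.Dual 𝕜 M, EqOn ξ f p ∧ EqOn ξ g q := by
  let f' : M →ₗ.[𝕜] 𝕜 := ⟨p, f.domRestrict p⟩
  let g' : M →ₗ.[𝕜] 𝕜 := ⟨q, g.domRestrict q⟩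
  have hf'g' : ∀ (x : p) (y : q), (x : M) = y → f' x = g' y := fun x y hxy =>
    (hfg ⟨x.2, hxy ▸ y.2⟩).trans (congrArg g hxy)
  obtain ⟨ξ, hξ⟩ := LinearMap.exists_extend (f'.sup g' hf'g').toFun
  refine ⟨ξ, fun x hx => ?_, fun x hx => ?_⟩
  · exact (LinearMap.congr_fun hξ ⟨x, Submodule.mem_sup_left hx⟩).trans
      ((LinearPMap.left_le_sup f' g' hf'g').2 (x := ⟨x, hx⟩) rfl).symm
  · exact (LinearMap.congr_fun hξ ⟨x, Submodule.mem_sup_right hx⟩).trans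
      ((LinearPMap.right_le_sup f' g' hf'g').2 (x := ⟨x, hx⟩) rfl).symm

end DualExtension

section Conjugation

variable {σ : V →ₛₗ[starRingEnd ℂ] V}

theorem conjDual_apply (σ : V →ₛₗ[starRingEnd ℂ] V) (ξ : Module.Dual ℂ V) (v : V) :
    conjDual σ ξ v = starRingEnd ℂ (ξ (σ v)) := rfl

theorem conjDual_conjDual (hσ : Involutive σ) (ξ : Module.Dual ℂ V) :
    conjDual σ (conjDual σ ξ) = ξ := by
  ext v
  simp [conjDual_apply, hσ v]

theorem sigmaHat_involutive (hσ : Involutive σ) : Involutive (sigmaHat σ) :=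
  fun p => Prod.ext (hσ p.1) (conjDual_conjDual hσ p.2)

theorem Submodule.mem_map_iff_of_involutive (hσ : Involutive σ) {E : Submodule ℂ V} {x : V} :
    x ∈ E.map σ ↔ σ x ∈ E :=
  ⟨by rintro ⟨y, hy, rfl⟩; rwa [hσ], fun h => ⟨σ x, h, hσ x⟩⟩

theorem eqOn_conjDual_iff (hσ : Involutive σ) {E : Submodule ℂ V} {ξ η : Module.Dual ℂ V} :
    EqOn (conjDual σ ξ) η E ↔ EqOn ξ (conjDual σ η) (E.map σ) := by
  simp only [EqOn, Submodule.map_coe, forall_mem_image, conjDual_apply, hσ _, SetLike.mem_coe]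
  exact forall₂_congr fun y _ => by
    rw [starRingEnd_apply, starRingEnd_apply, star_eq_iff_star_eq, eq_comm]

theorem mem_LSet_inter_image_sigmaHat_iff (hσ : Involutive σ) {E : Submodule ℂ V}
    {ε : V →ₗ[ℂ] V →ₗ[ℂ] ℂ} {x : V} {ξ : Module.Dual ℂ V} :
    (x, ξ) ∈ LSet E (fun x y => ε x y) ∩ sigmaHat σ '' LSet E (fun x y => ε x y) ↔
      x ∈ E ⊓ E.map σ ∧ EqOn ξ (ε x) E ∧ EqOn ξ (conjDual σ (ε (σ x))) (E.map σ) := by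
  rw [(sigmaHat_involutive hσ).image_eq_preimage_symm, ← eqOn_conjDual_iff hσ]
  simp only [LSet, sigmaHat, mem_inter_iff, mem_preimage, mem_ofPred_eq, Submodule.mem_inf,
    Submodule.mem_map_iff_of_involutive hσ, EqOn, SetLike.mem_coe]
  tauto

end Conjugation

theorem lInterConjEqK_iff_of_sum_general
    (σ : V →ₛₗ[starRingEnd ℂ] V) (hσinv : ∀ v, σ (σ v) = v)
    (K E : Submodule ℂ V) (hKE : K ≤ E)
    (hσK : σ '' (K : Set V) = K)
    (ε : V →ₗ[ℂ] V →ₗ[ℂ] ℂ)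
    (hεK : ∀ k ∈ K, ∀ x ∈ E, ε k x = 0)
    (hsum : ∀ v : V, ∃ a ∈ E, ∃ b ∈ E, v = a + σ b) :
    LSet E (fun x y => ε x y) ∩ sigmaHat σ '' LSet E (fun x y => ε x y) =
        (K : Set V) ×ˢ ({0} : Set (Module.Dual ℂ V)) ↔
      (∀ X : V, X ∈ (E : Set V) ∩ σ '' (E : Set V) →
        (∀ Y : V, Y ∈ (E : Set V) ∩ σ '' (E : Set V) →
          ε X Y = starRingEnd ℂ (ε (σ X) (σ Y))) → X ∈ K) := by
  have hσK' : ∀ k ∈ K, σ k ∈ K := fun k hk => hσK.subset (mem_image_of_mem σ hk)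
  have hcodisj : Codisjoint E (E.map σ) := codisjoint_iff.2 <| Submodule.eq_top_iff'.2 fun v => by
    obtain ⟨a, ha, b, hb, rfl⟩ := hsum v
    exact Submodule.add_mem_sup ha (Submodule.mem_map_of_mem hb)
  have hvanish : ∀ x ∈ K, EqOn (ε x) 0 E ∧ EqOn (conjDual σ (ε (σ x))) 0 (E.map σ) :=
    fun x hx => ⟨fun y hy => hεK x hx y hy, fun z hz => by
      obtain ⟨y, hy, rfl⟩ := hz
      simp [conjDual_apply, hσinv y, hεK (σ x) (hσK' x hx) y hy]⟩
  rw [← Submodule.map_coe, ← Submodule.coe_inf]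
  simp only [Set.ext_iff, Prod.forall, mem_LSet_inter_image_sigmaHat_iff hσinv, mem_prod,
    mem_singleton_iff]
  constructor
  · intro hL X hX hagree
    obtain ⟨ξ, hξE, hξF⟩ :=
      Module.Dual.exists_eqOn_of_eqOn_inf (f := ε X) (g := conjDual σ (ε (σ X))) hagree
    exact ((hL X ξ).1 ⟨hX, hξE, hξF⟩).1
  · intro hcond x ξ
    constructor
    · rintro ⟨hx, hξE, hξF⟩
      have hxK : x ∈ K := hcond x hx fun Y hY => (hξE hY.1).symm.trans (hξF hY.2)
      exact ⟨hxK, LinearMap.ext_on_codisjoint hcodisj (hξE.trans (hvanish x hxK).1)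
        (hξF.trans (hvanish x hxK).2)⟩
    · rintro ⟨hxK, rfl⟩
      exact ⟨⟨hKE hxK, (Submodule.mem_map_iff_of_involutive hσinv).2 (hKE (hσK' x hxK))⟩,
        (hvanish x hxK).1.symm, (hvanish x hxK).2.symm⟩

/-- If `E + σ(E) = V`, then `L ∩ σ̂(L) = K × {0}` iff every
`X ∈ E ∩ σ(E)` with `ε(X, Y) = conj (ε (σX, σY))` for all `Y ∈ E ∩ σ(E)` lies in `K`. -/
theorem lInterConjEqK_iff_of_sum [FiniteDimensional ℂ V]
    (σ : V →ₛₗ[starRingEnd ℂ] V) (hσinv : ∀ v, σ (σ v) = v)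
    (K E : Submodule ℂ V) (hKE : K ≤ E)
    (hσK : σ '' (K : Set V) = K)
    (ε : V →ₗ[ℂ] V →ₗ[ℂ] ℂ) (hεalt : ∀ x, ε x x = 0)
    (hεK : ∀ k ∈ K, ∀ x ∈ E, ε k x = 0)
    (hsum : ∀ v : V, ∃ a ∈ E, ∃ b ∈ E, v = a + σ b) :
    LSet E (fun x y => ε x y) ∩ sigmaHat σ '' LSet E (fun x y => ε x y) =
        (K : Set V) ×ˢ ({0} : Set (Module.Dual ℂ V)) ↔
      (∀ X : V, X ∈ (E : Set V) ∩ σ '' (E : Set V) →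
        (∀ Y : V, Y ∈ (E : Set V) ∩ σ '' (E : Set V) →
          ε X Y = starRingEnd ℂ (ε (σ X) (σ Y))) → X ∈ K) :=
  lInterConjEqK_iff_of_sum_general σ hσinv K E hKE hσK ε hεK hsum
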